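/- arXiv:1611.09515 — 7 statements merged into one kernel-verified Lean document; each statement's English description precedes it below -/
import Mathlib

section
/- In the gadget game D(X_1, ..., X_k, x; Y), for any pure Nash equilibrium s: s(Y) = x if and only if there exists i with s(X_i) = x; and s(Y) = ¬x if and only if s(X_i) = ¬x for all i. -/
/-!
Let `A` be the number of `X_i` playing `x`. Colour `x` pays `Y` exactly `A + (k - 1)` and `¬x`
pays `k - A`, so `x` is strictly better when `A ≥ 1` and strictly worse when `A = 0`.
-/

open Finset

lemma Bool.eq_of_forall_le_of_lt_not {α : Type*} [Preorder α] {f : Bool → α} {y c : Bool}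
    (hy : ∀ b, f b ≤ f y) (hc : f (!c) < f c) : y = c := by
  by_contra hne
  have hy' : y = !c := Bool.eq_not_iff.mpr hne
  exact (hc.trans_le (hy' ▸ hy c)).false

lemma card_filter_eq_not_add_card_filter_eq {ι : Type*} [Fintype ι] (s : ι → Bool) (x : Bool) :
    #{i | s i = !x} + #{i | s i = x} = Fintype.card ι := by
  simp_rw [Bool.eq_not_iff]
  rw [add_comm, card_filter_add_card_filter_not, card_univ]

/-- `payoff c` is `Y`'s payoff for colour `c`: the number of `X_i` playing `c`, plus the weight
`k - 1` of the auxiliary player fixed at `x`; `hNE` says that `y` is a best response. -/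
theorem stmt_2 (k : ℕ) (hk : 1 ≤ k) (x : Bool) (s : Fin k → Bool) (y : Bool)
    (payoff : Bool → ℕ)
    (hpay : ∀ c, payoff c =
      (Finset.univ.filter (fun i => s i = c)).card + (if c = x then k - 1 else 0))
    (hNE : ∀ c : Bool, payoff c ≤ payoff y) :
    (y = x ↔ ∃ i, s i = x) ∧ (y = !x ↔ ∀ i, s i = !x) := by
  have hcard := card_filter_eq_not_add_card_filter_eq s x
  rw [Fintype.card_fin] at hcard
  set A := #{i | s i = x}
  have hx : payoff x = A + (k - 1) := by simp [hpay, A]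
  have hnx : payoff (!x) = k - A := by
    simp only [hpay, Bool.not_eq_eq_eq_not, Bool.eq_not_self, ↓reduceIte, add_zero]
    omega
  have hyA : y = x ↔ 0 < A := by
    rcases Nat.eq_zero_or_pos A with hA | hA
    · have : y = !x := Bool.eq_of_forall_le_of_lt_not hNE (by rw [Bool.not_not, hx, hnx]; omega)
      simp [this, hA]
    · simpa [hA] using Bool.eq_of_forall_le_of_lt_not hNE (by rw [hx, hnx]; omega)
  have hyx : y = x ↔ ∃ i, s i = x := by
    rw [hyA, card_pos, filter_nonempty_iff]
    simp
  refine ⟨hyx, ?_⟩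
  rw [Bool.eq_not_iff, Ne, hyx, not_exists]
  simp_rw [Bool.eq_not_iff]
end

section
/- Let s be a pure Nash equilibrium of a coordination game on an unweighted colour-complete connected complete graph without bonuses, and let ⪰* be any total order on the colour set M extending the acyclic relation ≻_s. Then the joint strategy SP(⪰*), defined by SP(⪰*)(i) = max_{⪰*} C(i), equals s. Consequently, every pure Nash equilibrium of such a game arises as SP(⪰) for some total order ⪰ on M. -/
/-!
The first claim is immediate: `s i ≻_s c` for every `c ∈ C i`, and `r` extends `≻_s`.
For the second, in an equilibrium `s'` player `i` counts itself in `s' i`'s colour class but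
not in that of any other colour `c ∈ C i`, so the equilibrium condition makes the class of
`s' i` strictly larger than that of `c`. Any linear order refining "larger colour class first"
therefore has `s' i` as the maximum of `C i`.
-/

open Set in
theorem ncard_fiber_lt_of_le_ncard_others {V M : Type*} [Finite V] (s : V → M) (i : V)
    {c : M} (hc : c ≠ s i)
    (h : ncard {j | j ≠ i ∧ s j = c} ≤ ncard {j | j ≠ i ∧ s j = s i}) :
    ncard {j | s j = c} < ncard {j | s j = s i} := by
  have others_c : {j | j ≠ i ∧ s j = c} = {j | s j = c} := by
    ext j
    simp only [mem_ofPred_eq, and_iff_right_iff_imp]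
    rintro rfl rfl
    exact hc rfl
  have others_si : {j | j ≠ i ∧ s j = s i} = {j | s j = s i} \ {i} := by
    ext j
    simp [and_comm]
  rw [others_c, others_si] at h
  exact h.trans_lt (ncard_sdiff_singleton_lt_of_mem rfl (toFinite _))

theorem exists_isLinearOrder_of_lt_rank {M : Type*} (f : M → ℕ) :
    ∃ r : M → M → Prop, IsLinearOrder M r ∧ ∀ x y, f y < f x → r x y := by
  let key : M ↪ ℕᵒᵈ ×ₗ Cardinal :=
    ⟨fun x => toLex (OrderDual.toDual (f x), embeddingToCardinal x),
      fun x y h => embeddingToCardinal.injective (congrArg (·.2) h)⟩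
  exact ⟨key ⁻¹'o (· ≤ ·), (RelEmbedding.preimage key _).isLinearOrder,
    fun x y h => (Prod.Lex.toLex_lt_toLex.2 (Or.inl h)).le⟩

theorem stmt_5_general {V M : Type*} [Fintype V]
    (C : V → Finset M)
    (s : V → M) (hs : ∀ i, s i ∈ C i)
    (r : M → M → Prop)
    (hext : ∀ x y, (∃ i, x ∈ C i ∧ y ∈ C i ∧ s i = x) → r x y) :
    (∀ i, ∀ c ∈ C i, r (s i) c) ∧
    (∀ s' : V → M, (∀ i, s' i ∈ C i) →
      (∀ i, ∀ c ∈ C i,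
        Set.ncard {j : V | j ≠ i ∧ s' j = c} ≤ Set.ncard {j : V | j ≠ i ∧ s' j = s' i}) →
      ∃ r' : M → M → Prop, IsLinearOrder M r' ∧ ∀ i, ∀ c ∈ C i, r' (s' i) c) := by
  refine ⟨fun i c hc => hext _ _ ⟨i, hs i, hc, rfl⟩, fun s' _ hNE' => ?_⟩
  obtain ⟨r', hr', hr'_of_lt⟩ :=
    exists_isLinearOrder_of_lt_rank fun x => Set.ncard {j | s' j = x}
  refine ⟨r', hr', fun i c hc => ?_⟩
  obtain rfl | hc_ne := eq_or_ne c (s' i)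
  · exact hr'.refl _
  · exact hr'_of_lt _ _ (ncard_fiber_lt_of_le_ncard_others s' i hc_ne (hNE' i c hc))

/-- Let `s` be a pure Nash equilibrium of a coordination game on an unweighted complete
directed graph without bonuses (the payoff of `i` for colour `c` is the number of other
players choosing `c`), and let `r` be any total order on colours extending the relation
`≻_s` (`x ≻_s y` iff some player `i` has `x, y ∈ C i` and `s i = x`).  Then the strategy
`SP(r)` assigning each player the `r`-maximal colour of `C i` equals `s`, i.e. `s i` is
the `r`-maximum of `C i` for every `i`.  Consequently, every pure Nash equilibrium of
such a game arises as `SP(r')` for some total order `r'`. -/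
theorem stmt_5 {V M : Type*} [Fintype V]
    (C : V → Finset M) (hC : ∀ i, (C i).Nonempty)
    (s : V → M) (hs : ∀ i, s i ∈ C i)
    (hNE : ∀ i, ∀ c ∈ C i,
      Set.ncard {j : V | j ≠ i ∧ s j = c} ≤ Set.ncard {j : V | j ≠ i ∧ s j = s i})
    (r : M → M → Prop) [IsLinearOrder M r]
    (hext : ∀ x y, (∃ i, x ∈ C i ∧ y ∈ C i ∧ s i = x) → r x y) :
    (∀ i, ∀ c ∈ C i, r (s i) c) ∧
    (∀ s' : V → M, (∀ i, s' i ∈ C i) →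
      (∀ i, ∀ c ∈ C i,
        Set.ncard {j : V | j ≠ i ∧ s' j = c} ≤ Set.ncard {j : V | j ≠ i ∧ s' j = s' i}) →
      ∃ r' : M → M → Prop, IsLinearOrder M r' ∧ ∀ i, ∀ c ∈ C i, r' (s' i) c) :=
  stmt_5_general C s hs r hext
end

section
/- In the game of Example: players are all unordered pairs {x,y} of distinct colours from M = {1,...,m} arranged as a complete directed graph (all players mutually connected), with C({x,y}) = {x,y}. For the total order m ⪰ m−1 ⪰ ... ⪰ 1, the induced joint strategy SP(⪰) (each player picks its ⪰-maximal available colour) is a pure Nash equilibrium, in which exactly x−1 players choose colour x for each x ∈ M, and each player choosing colour x receives payoff x−2. -/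
/-! Under `SP` the players choosing colour `v` are exactly the pairs `(u, v)` with `u < v`, so
there are as many of them as colours below `v`. A player `(u, v)` therefore sees the other
`#(Iio v) - 1` players of colour `v`, while switching to `u` would give it the `#(Iio u)`
players of colour `u`, none of whom is itself; since `u < v`, this is no more. -/

section StrictPairs

variable {α : Type*} [LinearOrder α]

lemma ncard_setOf_snd_eq (v : α) :
    {p : {p : α × α // p.1 < p.2} | p.val.2 = v}.ncard = (Set.Iio v).ncard := by
  refine Set.ncard_congr (fun p _ => p.val.1) (fun p hp => hp ▸ p.prop) ?_ ?_
  · intro p q hp hq hfst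
    exact Subtype.ext (Prod.ext hfst (hp.trans hq.symm))
  · intro u hu
    exact ⟨⟨(u, v), hu⟩, rfl, rfl⟩

lemma ncard_setOf_ne_and_snd_eq_snd [Finite α] (p : {p : α × α // p.1 < p.2}) :
    {q : {p : α × α // p.1 < p.2} | q ≠ p ∧ q.val.2 = p.val.2}.ncard =
      (Set.Iio p.val.2).ncard - 1 := by
  have hdiff : {q : {p : α × α // p.1 < p.2} | q ≠ p ∧ q.val.2 = p.val.2} =
      {q | q.val.2 = p.val.2} \ {p} := by
    ext q
    simp only [Set.mem_ofPred_eq, Set.mem_sdiff, Set.mem_singleton_iff, and_comm]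
  rw [hdiff, Set.ncard_sdiff_singleton_of_mem (show p ∈ {q | q.val.2 = p.val.2} from rfl),
    ncard_setOf_snd_eq]

lemma ncard_setOf_ne_and_snd_eq_fst (p : {p : α × α // p.1 < p.2}) :
    {q : {p : α × α // p.1 < p.2} | q ≠ p ∧ q.val.2 = p.val.1}.ncard =
      (Set.Iio p.val.1).ncard := by
  have hne : ∀ q : {p : α × α // p.1 < p.2}, q.val.2 = p.val.1 → q ≠ p := by
    rintro q hq rfl
    exact q.prop.ne' hq
  rw [← ncard_setOf_snd_eq]
  congr 1
  ext q
  exact ⟨And.right, fun hq => ⟨hne q hq, hq⟩⟩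

end StrictPairs

lemma Fin.ncard_Iio {m : ℕ} (v : Fin m) : (Set.Iio v).ncard = v := by
  rw [← Finset.coe_Iio, Set.ncard_coe_finset, Fin.card_Iio]

theorem stmt_6_general (m : ℕ) :
    let P := {p : Fin m × Fin m // p.1 < p.2}
    let s : P → Fin m := fun p => p.val.2
    let payoff : P → Fin m → ℕ := fun p c => Set.ncard {p' : P | p' ≠ p ∧ s p' = c}
    (∀ p : P, ∀ c : Fin m, (c = p.val.1 ∨ c = p.val.2) → payoff p c ≤ payoff p (s p)) ∧
    (∀ v : Fin m, Set.ncard {p : P | s p = v} = v.val) ∧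
    (∀ p : P, payoff p (s p) = p.val.2.val - 1) := by
  intro P s payoff
  have hown (p : P) : payoff p (s p) = p.val.2.val - 1 := by
    exact (ncard_setOf_ne_and_snd_eq_snd p).trans (by rw [Fin.ncard_Iio])
  have hother (p : P) : payoff p p.val.1 = p.val.1.val := by
    exact (ncard_setOf_ne_and_snd_eq_fst p).trans (Fin.ncard_Iio _)
  refine ⟨?_, fun v => (ncard_setOf_snd_eq v).trans (Fin.ncard_Iio v), hown⟩
  rintro p c (rfl | rfl)
  · rw [hother, hown]
    have hlt : p.val.1.val < p.val.2.val := p.prop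
    omega
  · exact le_rfl

/-- The example game: players are the pairs `{x,y}` of distinct colours from `Fin m`
(represented as ordered pairs with `p.1 < p.2`), arranged in a complete directed graph,
with colour set `{p.1, p.2}` for player `p`.  For the natural total order on `Fin m`,
the induced strategy `SP` (every player picks its larger colour, i.e. `p.2`) is a pure
Nash equilibrium; exactly `v` players choose colour `v` (so, in the paper's 1-based
numbering, colour `x` is chosen by `x - 1` players), and a player choosing colour `v`
receives payoff `v - 1` (the paper's `x - 2`). -/
theorem stmt_6 (m : ℕ) (hm : 2 ≤ m) :
    let P := {p : Fin m × Fin m // p.1 < p.2}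
    let s : P → Fin m := fun p => p.val.2
    let payoff : P → Fin m → ℕ := fun p c => Set.ncard {p' : P | p' ≠ p ∧ s p' = c}
    (∀ p : P, ∀ c : Fin m, (c = p.val.1 ∨ c = p.val.2) → payoff p c ≤ payoff p (s p)) ∧
    (∀ v : Fin m, Set.ncard {p : P | s p = v} = v.val) ∧
    (∀ p : P, payoff p (s p) = p.val.2.val - 1) :=
  stmt_6_general m
end

section
/- Consider a coordination game with colour set M = {0,1} on a weighted directed graph. Define F : joint strategies → joint strategies as the result of the following process starting from s: repeatedly, while some player j with 1 ∈ C(j) currently playing 0 would strictly gain by switching to 1 (given the current strategies), switch that player to 1. Then F(s) is well-defined (the process terminates), F is monotone with respect to the pointwise order (s ⪯ s' implies F(s) ⪯ F(s')), and every pure Nash equilibrium is a fixed point of F. -/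
/-!
Switching a player from `0` to `1` only moves the joint strategy up in the pointwise order, so
the process terminates. In a coordination game the gain of switching to `1` grows with the set of
players already playing `1`. Hence if `a ⪯ t'` with `t'` terminal, a player who can profitably
switch at `a` either already plays `1` in `t'` or could also switch there, which is impossible; so
every process started below a terminal `t'` stays below it. This gives monotonicity of the result,
and applying it in both directions gives its uniqueness.
-/

open Finset

def UpSwitch {V : Type*} [DecidableEq V] (P : V → (V → Bool) → Prop) (s s' : V → Bool) : Prop :=
  ∃ j, s j = false ∧ P j s ∧ s' = Function.update s j true

namespace UpSwitch

variable {V : Type*} [DecidableEq V] {P : V → (V → Bool) → Prop}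

theorem lt {s s' : V → Bool} (h : UpSwitch P s s') : s < s' := by
  obtain ⟨j, hj, -, rfl⟩ := h
  refine lt_of_le_of_ne (fun i => ?_) fun heq => ?_
  · rcases eq_or_ne i j with rfl | hij
    · simp
    · rw [Function.update_of_ne hij]
  · simpa [hj] using congr_fun heq j

theorem le_of_reflTransGen {s t : V → Bool} (h : Relation.ReflTransGen (UpSwitch P) s t) :
    s ≤ t := by
  induction h with
  | refl => exact le_rfl
  | tail _ hstep ih => exact ih.trans hstep.lt.le

theorem exists_reflTransGen_terminal [Finite V] (s : V → Bool) :
    ∃ t, Relation.ReflTransGen (UpSwitch P) s t ∧ ∀ u, ¬ UpSwitch P t u := by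
  induction s using WellFoundedGT.induction with
  | _ s ih =>
    by_cases hterm : ∀ u, ¬ UpSwitch P s u
    · exact ⟨s, .refl, hterm⟩
    · push Not at hterm
      obtain ⟨u, hu⟩ := hterm
      obtain ⟨t, hut, ht⟩ := ih u hu.lt
      exact ⟨t, .head hu hut, ht⟩

theorem le_of_le_terminal (hP : ∀ j, Monotone (P j)) {t' a b : V → Bool}
    (hterm : ∀ u, ¬ UpSwitch P t' u) (ha : a ≤ t') (hab : UpSwitch P a b) : b ≤ t' := by
  obtain ⟨j, -, hPj, rfl⟩ := hab
  have ht'j : t' j = true := by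
    by_contra h
    exact hterm _ ⟨j, by simpa using h, hP j ha hPj, rfl⟩
  intro i
  rcases eq_or_ne i j with rfl | hij
  · simp [ht'j]
  · rw [Function.update_of_ne hij]
    exact ha i

theorem le_of_reflTransGen_of_le_terminal (hP : ∀ j, Monotone (P j)) {s t t' : V → Bool}
    (hterm : ∀ u, ¬ UpSwitch P t' u) (hs : s ≤ t') (h : Relation.ReflTransGen (UpSwitch P) s t) :
    t ≤ t' := by
  induction h with
  | refl => exact hs
  | tail _ hstep ih => exact le_of_le_terminal hP hterm ih hstep

theorem terminal_mono (hP : ∀ j, Monotone (P j)) {s s' t t' : V → Bool} (hle : s ≤ s')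
    (ht : Relation.ReflTransGen (UpSwitch P) s t) (hterm : ∀ u, ¬ UpSwitch P t' u)
    (ht' : Relation.ReflTransGen (UpSwitch P) s' t') : t ≤ t' :=
  le_of_reflTransGen_of_le_terminal hP hterm (hle.trans (le_of_reflTransGen ht')) ht

theorem existsUnique_terminal [Finite V] (hP : ∀ j, Monotone (P j)) (s : V → Bool) :
    ∃! t, Relation.ReflTransGen (UpSwitch P) s t ∧ ∀ u, ¬ UpSwitch P t u := by
  obtain ⟨t, ht, hterm⟩ := exists_reflTransGen_terminal (P := P) s
  refine ⟨t, ⟨ht, hterm⟩, fun t' ⟨ht', hterm'⟩ => le_antisymm ?_ ?_⟩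
  · exact terminal_mono hP le_rfl ht' hterm ht
  · exact terminal_mono hP le_rfl ht hterm' ht'

end UpSwitch

section CoordinationGame

variable {V : Type*} [Fintype V] (E : V → V → Prop) [DecidableRel E] (w : V → V → ℚ)
  (β : V → Bool → ℤ)

def coordPayoff (i : V) (c : Bool) (s : V → Bool) : ℚ :=
  (∑ j ∈ univ.filter (fun j => E j i ∧ s j = c), w j i) + (β i c : ℚ)

variable {E w β}

theorem monotone_coordPayoff_true (hw : ∀ i j, 0 ≤ w i j) (i : V) :
    Monotone (coordPayoff E w β i true) := by
  intro s s' h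
  have hsub : univ.filter (fun j => E j i ∧ s j = true) ⊆
      univ.filter (fun j => E j i ∧ s' j = true) := by
    intro j
    simp only [mem_filter, mem_univ, true_and]
    exact fun ⟨hE, hj⟩ => ⟨hE, top_le_iff.mp (hj ▸ h j : true ≤ s' j)⟩
  simpa [coordPayoff] using sum_le_sum_of_subset_of_nonneg hsub fun j _ _ => hw j i

theorem antitone_coordPayoff_false (hw : ∀ i j, 0 ≤ w i j) (i : V) :
    Antitone (coordPayoff E w β i false) := by
  intro s s' h
  have hsub : univ.filter (fun j => E j i ∧ s' j = false) ⊆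
      univ.filter (fun j => E j i ∧ s j = false) := by
    intro j
    simp only [mem_filter, mem_univ, true_and]
    exact fun ⟨hE, hj⟩ => ⟨hE, le_bot_iff.mp (hj ▸ h j : s j ≤ false)⟩
  simpa [coordPayoff] using sum_le_sum_of_subset_of_nonneg hsub fun j _ _ => hw j i

theorem monotone_coordPayoff_false_lt_true (hw : ∀ i j, 0 ≤ w i j) (i : V) :
    Monotone fun s => coordPayoff E w β i false s < coordPayoff E w β i true s :=
  fun _ _ h hlt =>
    (antitone_coordPayoff_false hw i h).trans_lt (hlt.trans_le (monotone_coordPayoff_true hw i h))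

end CoordinationGame

/-- Two-colour coordination game on a weighted directed graph (colours `false = 0`,
`true = 1`).  `Step s s'` holds when `s'` is obtained from `s` by switching one player
who plays `0`, has `1` available, and strictly gains by switching, to `1`.  Then:
(1) from every joint strategy the greedy switching process terminates in a unique
result, so `F` is well-defined; (2) `F` is monotone for the pointwise order; and
(3) every pure Nash equilibrium is a fixed point of `F` (it is terminal, so the process
started from it returns it unchanged). -/
theorem stmt_8 {V : Type*} [Fintype V] [DecidableEq V]
    (E : V → V → Prop) [DecidableRel E]
    (w : V → V → ℚ) (hw : ∀ i j, 0 ≤ w i j)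
    (C : V → Finset Bool) (β : V → Bool → ℤ)
    (payoff : V → Bool → (V → Bool) → ℚ)
    (hpayoff : ∀ i c s, payoff i c s =
      (∑ j ∈ Finset.univ.filter (fun j => E j i ∧ s j = c), w j i) + (β i c : ℚ))
    (Step : (V → Bool) → (V → Bool) → Prop)
    (hStep : ∀ s s', Step s s' ↔ ∃ j, s j = false ∧ true ∈ C j ∧
      payoff j false s < payoff j true s ∧ s' = Function.update s j true) :
    (∀ s : V → Bool, ∃! t, Relation.ReflTransGen Step s t ∧ ∀ u, ¬ Step t u) ∧
    (∀ s s' t t', (∀ i, s i ≤ s' i) →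
      Relation.ReflTransGen Step s t → (∀ u, ¬ Step t u) →
      Relation.ReflTransGen Step s' t' → (∀ u, ¬ Step t' u) →
      ∀ i, t i ≤ t' i) ∧
    (∀ s : V → Bool, (∀ i, s i ∈ C i) →
      (∀ i, ∀ c ∈ C i, payoff i c s ≤ payoff i (s i) s) →
      ∀ u, ¬ Step s u) := by
  obtain rfl : payoff = coordPayoff E w β := by
    funext i c s
    exact hpayoff i c s
  obtain rfl : Step = UpSwitch fun j s =>
      true ∈ C j ∧ coordPayoff E w β j false s < coordPayoff E w β j true s := by
    funext s s'
    exact propext ((hStep s s').trans (by simp only [UpSwitch, and_assoc]))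
  have hP : ∀ j, Monotone fun s =>
      true ∈ C j ∧ coordPayoff E w β j false s < coordPayoff E w β j true s :=
    fun j _ _ h => And.imp_right (monotone_coordPayoff_false_lt_true hw j h)
  refine ⟨UpSwitch.existsUnique_terminal hP, ?_, ?_⟩
  · intro s s' t t' hle ht _ ht' hterm'
    exact UpSwitch.terminal_mono hP hle ht hterm' ht'
  · rintro s - hNash u ⟨j, hj, ⟨hC, hlt⟩, -⟩
    have := hNash j true hC
    rw [hj] at this
    exact this.not_gt hlt
end

section
/- In a two-colour coordination game on a weighted directed graph, for any joint strategy s, the joint strategy F(s) obtained by repeatedly switching (from 0 to 1) any player who currently plays 0, has 1 available, and strictly gains by switching, until no such player remains, is a pure Nash equilibrium, provided the initial strategy s assigns to each player with 0 ∈ C(i) the colour 0 and to every other player the colour 1. -/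
/-!
Along the greedy process players only ever switch from `0` to `1`, so the joint strategy grows
pointwise. With nonnegative weights this makes the payoff of colour `1` weakly increase and that
of colour `0` weakly decrease for every player. Hence "colour `1` is a best response" is invariant
for every player currently playing `1`: it holds initially because such a player has only `1`
available, and a player switches only when `1` is strictly better. A player still at `0` in a
terminal strategy cannot strictly gain by switching, so `0` is a best response there as well.
-/

open Finset

section NeighbourWeight

variable {V M : Type*} [Fintype V] [AddCommMonoid M] [PartialOrder M] [IsOrderedAddMonoid M]
  (p : V → Prop) [DecidablePred p] {w : V → M} {s s' : V → Bool}

lemma sum_filter_eq_true_le_of_le (hw : ∀ j, 0 ≤ w j) (h : s ≤ s') :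
    ∑ j ∈ univ.filter (fun j => p j ∧ s j = true), w j ≤
      ∑ j ∈ univ.filter (fun j => p j ∧ s' j = true), w j := by
  refine sum_le_sum_of_subset_of_nonneg (fun j hj => ?_) (fun j _ _ => hw j)
  simp only [mem_filter, mem_univ, true_and] at hj ⊢
  exact ⟨hj.1, top_le_iff.1 (by simpa [hj.2] using h j)⟩

lemma sum_filter_eq_false_le_of_le (hw : ∀ j, 0 ≤ w j) (h : s ≤ s') :
    ∑ j ∈ univ.filter (fun j => p j ∧ s' j = false), w j ≤
      ∑ j ∈ univ.filter (fun j => p j ∧ s j = false), w j := by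
  refine sum_le_sum_of_subset_of_nonneg (fun j hj => ?_) (fun j _ _ => hw j)
  simp only [mem_filter, mem_univ, true_and] at hj ⊢
  exact ⟨hj.1, le_bot_iff.1 (by simpa [hj.2] using h j)⟩

end NeighbourWeight

section CoordinationGame

variable {V : Type*} {payoff : V → Bool → (V → Bool) → ℚ} {C : V → Finset Bool}

lemma payoff_false_le_true_of_le [Fintype V] {E : V → V → Prop} [DecidableRel E]
    {w : V → V → ℚ} {β : V → Bool → ℤ}
    (hpayoff : ∀ i c s, payoff i c s =
      (∑ j ∈ univ.filter (fun j => E j i ∧ s j = c), w j i) + (β i c : ℚ))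
    (hw : ∀ i j, 0 ≤ w i j) {i : V} {s s' : V → Bool}
    (h : s ≤ s') (hs : payoff i false s ≤ payoff i true s) :
    payoff i false s' ≤ payoff i true s' := by
  have hfalse : payoff i false s' ≤ payoff i false s := by
    rw [hpayoff, hpayoff]
    exact add_le_add_left (sum_filter_eq_false_le_of_le _ (hw · i) h) _
  have htrue : payoff i true s ≤ payoff i true s' := by
    rw [hpayoff, hpayoff]
    exact add_le_add_left (sum_filter_eq_true_le_of_le _ (hw · i) h) _
  exact hfalse.trans (hs.trans htrue)

def GreedyInvariant (C : V → Finset Bool) (payoff : V → Bool → (V → Bool) → ℚ)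
    (s : V → Bool) : Prop :=
  ∀ i, s i ∈ C i ∧ (s i = true → ∀ c ∈ C i, payoff i c s ≤ payoff i true s)

lemma greedyInvariant_init (hC : ∀ i, (C i).Nonempty) {s₀ : V → Bool}
    (hs₀ : ∀ i, s₀ i = if false ∈ C i then false else true) :
    GreedyInvariant C payoff s₀ := by
  intro i
  by_cases hfalse : false ∈ C i
  · simp [hs₀ i, hfalse]
  · have hC_true : ∀ c ∈ C i, c = true := fun c hc => by
      cases c
      · exact absurd hc hfalse
      · rfl
    obtain ⟨c, hc⟩ := hC i
    simp only [hs₀ i, hfalse, if_false]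
    exact ⟨hC_true c hc ▸ hc, fun _ c hc => by rw [hC_true c hc]⟩

lemma GreedyInvariant.update_true [Fintype V] [DecidableEq V] {E : V → V → Prop}
    [DecidableRel E] {w : V → V → ℚ} {β : V → Bool → ℤ}
    (hpayoff : ∀ i c s, payoff i c s =
      (∑ j ∈ univ.filter (fun j => E j i ∧ s j = c), w j i) + (β i c : ℚ))
    (hw : ∀ i j, 0 ≤ w i j) {s : V → Bool} (hs : GreedyInvariant C payoff s) {j : V}
    (hjC : true ∈ C j) (hgain : payoff j false s < payoff j true s) :
    GreedyInvariant C payoff (Function.update s j true) := by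
  have hle : s ≤ Function.update s j true := le_update_self_iff.2 le_top
  intro i
  have hbest : s i = true ∨ i = j → ∀ c ∈ C i,
      payoff i c (Function.update s j true) ≤ payoff i true (Function.update s j true) := by
    rintro hi (_ | _) hc
    · refine payoff_false_le_true_of_le hpayoff hw hle ?_
      rcases hi with hi | rfl
      · exact (hs i).2 hi false hc
      · exact hgain.le
    · exact le_rfl
  rcases eq_or_ne i j with rfl | hij
  · rw [Function.update_self]
    exact ⟨hjC, fun _ => hbest (Or.inr rfl)⟩
  · simp only [Function.update_of_ne hij]
    exact ⟨(hs i).1, fun hi => hbest (Or.inl hi)⟩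

end CoordinationGame

/-- In a two-colour coordination game on a weighted directed graph, starting from the
joint strategy `s₀` that assigns colour `0` (`false`) to every player who has it
available and `1` (`true`) to everyone else, any terminal result of the greedy
`0`-to-`1` switching process is a pure Nash equilibrium. -/
theorem stmt_9 {V : Type*} [Fintype V] [DecidableEq V]
    (E : V → V → Prop) [DecidableRel E]
    (w : V → V → ℚ) (hw : ∀ i j, 0 ≤ w i j)
    (C : V → Finset Bool) (hC : ∀ i, (C i).Nonempty) (β : V → Bool → ℤ)
    (payoff : V → Bool → (V → Bool) → ℚ)
    (hpayoff : ∀ i c s, payoff i c s =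
      (∑ j ∈ Finset.univ.filter (fun j => E j i ∧ s j = c), w j i) + (β i c : ℚ))
    (Step : (V → Bool) → (V → Bool) → Prop)
    (hStep : ∀ s s', Step s s' ↔ ∃ j, s j = false ∧ true ∈ C j ∧
      payoff j false s < payoff j true s ∧ s' = Function.update s j true)
    (s₀ : V → Bool) (hs₀ : ∀ i, s₀ i = if false ∈ C i then false else true)
    (t : V → Bool) (hreach : Relation.ReflTransGen Step s₀ t)
    (hterm : ∀ u, ¬ Step t u) :
    (∀ i, t i ∈ C i) ∧ ∀ i, ∀ c ∈ C i, payoff i c t ≤ payoff i (t i) t := by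
  have hinv : ∀ s, Relation.ReflTransGen Step s₀ s → GreedyInvariant C payoff s := by
    intro s hs
    induction hs with
    | refl => exact greedyInvariant_init hC hs₀
    | tail _ hstep ih =>
      obtain ⟨j, -, hjC, hgain, rfl⟩ := (hStep _ _).1 hstep
      exact ih.update_true hpayoff hw hjC hgain
  refine ⟨fun i => (hinv t hreach i).1, fun i c hc => ?_⟩
  cases hti : t i
  · cases c
    · exact le_rfl
    · exact not_lt.1 fun hgain => hterm _ ((hStep _ _).2 ⟨i, hti, hc, hgain, rfl⟩)
  · exact (hinv t hreach i).2 hti c hc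
end

section
/- For two-colour coordination games on weighted directed graphs, every pure Nash equilibrium is consistent with a monochromatic query q (asking all queried players to play colour 0) if and only if F'(s_1)(i) = 0 for all queried players i, where s_1 is the ⪯-greatest joint strategy (each player plays 1 if available, else 0) and F' is the greedy 1-to-0 switching operator. -/
/-!
Order joint strategies pointwise with `false < true`. In a coordination game a player's payoff
for `1` is monotone and for `0` antitone in the joint strategy, so every switch `1 ↦ 0` of the
greedy process only makes `0` more attractive to everybody. Hence, starting from the greatest
feasible strategy `s₁`, every player at `0` strictly prefers `0` throughout, and a terminal
point of the process is a Nash equilibrium. Conversely a Nash equilibrium `s` stays below every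
point reachable from `s₁`: a player at `1` in `s` weakly prefers `1` there, so by monotonicity
she never strictly gains by switching at a point above `s`. Since the process terminates, both
directions follow.
-/

open Finset Function Relation

theorem Relation.exists_reflTransGen_forall_not_of_lt {α : Type*} [Preorder α] [WellFoundedLT α]
    {r : α → α → Prop} (hr : ∀ a b, r a b → b < a) (a : α) :
    ∃ b, ReflTransGen r a b ∧ ∀ c, ¬ r b c := by
  obtain ⟨b, hab, hmin⟩ := wellFounded_lt.has_min {b | ReflTransGen r a b} ⟨a, .refl⟩
  exact ⟨b, hab, fun c hbc => hmin c (hab.tail hbc) (hr b c hbc)⟩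

namespace TwoColour

section General

variable {V α : Type*} [LinearOrder α]
  (C : V → Finset Bool) (payoff : V → Bool → (V → Bool) → α)

def IsNash (s : V → Bool) : Prop :=
  (∀ i, s i ∈ C i) ∧ ∀ i, ∀ c ∈ C i, payoff i c s ≤ payoff i (s i) s

def SwitchStep [DecidableEq V] (s s' : V → Bool) : Prop :=
  ∃ j, s j = true ∧ false ∈ C j ∧ payoff j true s < payoff j false s ∧
    s' = update s j false

def maxStrategy (i : V) : Bool := decide (true ∈ C i)

def FalseStrictlyPreferred (s : V → Bool) : Prop :=
  (∀ i, s i ∈ C i) ∧ ∀ i, s i = false → true ∈ C i → payoff i true s < payoff i false s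

variable {C payoff}

theorem le_maxStrategy {s : V → Bool} (hs : ∀ i, s i ∈ C i) : s ≤ maxStrategy C := fun i => by
  cases hsi : s i
  · exact Bool.false_le _
  · have htrue := hsi ▸ hs i
    simp [maxStrategy, htrue]

theorem falseStrictlyPreferred_maxStrategy (hC : ∀ i, (C i).Nonempty) :
    FalseStrictlyPreferred C payoff (maxStrategy C) := by
  refine ⟨fun i => ?_, fun i hi htrue => by simp [maxStrategy, htrue] at hi⟩
  obtain ⟨c, hc⟩ := hC i
  by_cases htrue : true ∈ C i
  · simp [maxStrategy, htrue]
  · cases c <;> simp_all [maxStrategy]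

variable [DecidableEq V]

theorem SwitchStep.lt {s s' : V → Bool} (h : SwitchStep C payoff s s') : s' < s := by
  obtain ⟨j, hj, -, -, rfl⟩ := h
  simp [hj]

theorem FalseStrictlyPreferred.isNash {t : V → Bool} (ht : FalseStrictlyPreferred C payoff t)
    (hterm : ∀ u, ¬ SwitchStep C payoff t u) : IsNash C payoff t := by
  refine ⟨ht.1, fun i c hc => ?_⟩
  cases hti : t i <;> cases c
  · exact le_rfl
  · exact (ht.2 i hti hc).le
  · exact not_lt.1 fun hgain => hterm _ ⟨i, hti, hc, hgain, rfl⟩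
  · exact le_rfl

variable (hmono : ∀ i, Monotone (payoff i true)) (hanti : ∀ i, Antitone (payoff i false))
include hmono hanti

theorem FalseStrictlyPreferred.of_switchStep {s s' : V → Bool}
    (hs : FalseStrictlyPreferred C payoff s) (hstep : SwitchStep C payoff s s') :
    FalseStrictlyPreferred C payoff s' := by
  have hle : s' ≤ s := hstep.lt.le
  obtain ⟨j, -, hj, hgain, rfl⟩ := hstep
  refine ⟨fun i => ?_, fun i hi htrue => ?_⟩
  · rcases eq_or_ne i j with rfl | hij
    · simpa using hj
    · simpa [hij] using hs.1 i
  · have hlt : payoff i true s < payoff i false s := by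
      rcases eq_or_ne i j with rfl | hij
      · exact hgain
      · exact hs.2 i (by simpa [hij] using hi) htrue
    calc payoff i true (update s j false) ≤ payoff i true s := hmono i hle
      _ < payoff i false s := hlt
      _ ≤ payoff i false (update s j false) := hanti i hle

theorem falseStrictlyPreferred_of_reflTransGen (hC : ∀ i, (C i).Nonempty) {t : V → Bool}
    (ht : ReflTransGen (SwitchStep C payoff) (maxStrategy C) t) :
    FalseStrictlyPreferred C payoff t := by
  induction ht with
  | refl => exact falseStrictlyPreferred_maxStrategy hC
  | tail _ hstep ih => exact ih.of_switchStep hmono hanti hstep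

theorem IsNash.le_of_reflTransGen {s t : V → Bool} (hs : IsNash C payoff s)
    (ht : ReflTransGen (SwitchStep C payoff) (maxStrategy C) t) : s ≤ t := by
  induction ht with
  | refl => exact le_maxStrategy hs.1
  | @tail b _ _ hstep hsb =>
    obtain ⟨j, -, hj, hgain, rfl⟩ := hstep
    refine le_update_iff.2 ⟨?_, fun i _ => hsb i⟩
    cases hsj : s j
    · exact le_rfl
    · have hprefer : payoff j false s ≤ payoff j true s := hsj ▸ hs.2 j false hj
      exact absurd hgain (hanti j hsb |>.trans hprefer |>.trans (hmono j hsb)).not_gt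

end General

section Coordination

variable {V : Type*} [Fintype V] (E : V → V → Prop) [DecidableRel E] (w : V → V → ℚ)
  (β : V → Bool → ℤ)

def coordinationPayoff (i : V) (c : Bool) (s : V → Bool) : ℚ :=
  (∑ j ∈ univ.filter (fun j => E j i ∧ s j = c), w j i) + (β i c : ℚ)

variable {E w β}

theorem monotone_coordinationPayoff_true (hw : ∀ i j, 0 ≤ w i j) (i : V) :
    Monotone (coordinationPayoff E w β i true) := fun s t hst => by
  refine add_le_add_left (sum_le_sum_of_subset_of_nonneg (fun j => ?_) fun j _ _ => hw j i) _
  simp only [mem_filter, mem_univ, true_and]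
  exact fun ⟨hE, hs⟩ => ⟨hE, top_le_iff.1 (hs.symm.trans_le (hst j))⟩

theorem antitone_coordinationPayoff_false (hw : ∀ i j, 0 ≤ w i j) (i : V) :
    Antitone (coordinationPayoff E w β i false) := fun s t hst => by
  refine add_le_add_left (sum_le_sum_of_subset_of_nonneg (fun j => ?_) fun j _ _ => hw j i) _
  simp only [mem_filter, mem_univ, true_and]
  exact fun ⟨hE, ht⟩ => ⟨hE, le_bot_iff.1 ((hst j).trans_eq ht)⟩

end Coordination

end TwoColour

open TwoColour in
theorem stmt_11_general {V : Type*} [Fintype V] [DecidableEq V]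
    (E : V → V → Prop) [DecidableRel E]
    (w : V → V → ℚ) (hw : ∀ i j, 0 ≤ w i j)
    (C : V → Finset Bool) (hC : ∀ i, (C i).Nonempty) (β : V → Bool → ℤ)
    (payoff : V → Bool → (V → Bool) → ℚ)
    (hpayoff : ∀ i c s, payoff i c s =
      (∑ j ∈ Finset.univ.filter (fun j => E j i ∧ s j = c), w j i) + (β i c : ℚ))
    (Step' : (V → Bool) → (V → Bool) → Prop)
    (hStep' : ∀ s s', Step' s s' ↔ ∃ j, s j = true ∧ false ∈ C j ∧
      payoff j true s < payoff j false s ∧ s' = Function.update s j false)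
    (s₁ : V → Bool) (hs₁ : ∀ i, s₁ i = if true ∈ C i then true else false)
    (Q : Finset V) :
    (∀ s : V → Bool, (∀ i, s i ∈ C i) →
      (∀ i, ∀ c ∈ C i, payoff i c s ≤ payoff i (s i) s) → ∀ i ∈ Q, s i = false) ↔
    (∀ t : V → Bool, Relation.ReflTransGen Step' s₁ t → (∀ u, ¬ Step' t u) →
      ∀ i ∈ Q, t i = false) := by
  obtain rfl : payoff = coordinationPayoff E w β := by funext i c s; exact hpayoff i c s
  obtain rfl : Step' = SwitchStep C (coordinationPayoff E w β) := by
    ext s s'; exact hStep' s s'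
  obtain rfl : s₁ = maxStrategy C := by funext i; simp [hs₁, maxStrategy]
  have hmono := monotone_coordinationPayoff_true (E := E) (w := w) (β := β) hw
  have hanti := antitone_coordinationPayoff_false (E := E) (w := w) (β := β) hw
  constructor
  · intro hNash t ht hterm
    have ht' := (falseStrictlyPreferred_of_reflTransGen hmono hanti hC ht).isNash hterm
    exact hNash t ht'.1 ht'.2
  · intro hTerm s hsC hsNash i hi
    obtain ⟨t, ht, hterm⟩ :=
      exists_reflTransGen_forall_not_of_lt (r := SwitchStep C (coordinationPayoff E w β))
        (fun _ _ h => h.lt) (maxStrategy C)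
    have hst : s i ≤ t i := IsNash.le_of_reflTransGen hmono hanti ⟨hsC, hsNash⟩ ht i
    exact Bool.eq_false_of_le_false (hst.trans_eq (hTerm t ht hterm i hi))

/-- For two-colour coordination games on weighted directed graphs, every pure Nash
equilibrium is consistent with a monochromatic query (asking every player in `Q` to play
colour `0 = false`) iff the terminal result `F'(s₁)` of the greedy `1`-to-`0` switching
process started from the greatest joint strategy `s₁` assigns `0` to every queried
player. -/
theorem stmt_11 {V : Type*} [Fintype V] [DecidableEq V]
    (E : V → V → Prop) [DecidableRel E]
    (w : V → V → ℚ) (hw : ∀ i j, 0 ≤ w i j)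
    (C : V → Finset Bool) (hC : ∀ i, (C i).Nonempty) (β : V → Bool → ℤ)
    (payoff : V → Bool → (V → Bool) → ℚ)
    (hpayoff : ∀ i c s, payoff i c s =
      (∑ j ∈ Finset.univ.filter (fun j => E j i ∧ s j = c), w j i) + (β i c : ℚ))
    (Step' : (V → Bool) → (V → Bool) → Prop)
    (hStep' : ∀ s s', Step' s s' ↔ ∃ j, s j = true ∧ false ∈ C j ∧
      payoff j true s < payoff j false s ∧ s' = Function.update s j false)
    (s₁ : V → Bool) (hs₁ : ∀ i, s₁ i = if true ∈ C i then true else false)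
    (Q : Finset V) (hQ : ∀ i ∈ Q, false ∈ C i) :
    (∀ s : V → Bool, (∀ i, s i ∈ C i) →
      (∀ i, ∀ c ∈ C i, payoff i c s ≤ payoff i (s i) s) → ∀ i ∈ Q, s i = false) ↔
    (∀ t : V → Bool, Relation.ReflTransGen Step' s₁ t → (∀ u, ¬ Step' t u) →
      ∀ i ∈ Q, t i = false) :=
  stmt_11_general E w hw C hC β payoff hpayoff Step' hStep' s₁ hs₁ Q
end

section
/- In a coordination game on a directed acyclic graph, every partial joint strategy defined on a set D of players that is closed under predecessors (and in which each player in D plays a best response to the others in D) can be extended to a pure Nash equilibrium of the whole game by processing the remaining players in topological order and assigning each its best response. In particular, every coordination game on a DAG has a pure Nash equilibrium. -/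
/-!
Since the game graph is a finite DAG, the predecessor relation is well founded, and a
player's payoff depends only on its own colour and those of its predecessors. Keep `s` on
`D` and define the colour of every other player by well-founded recursion as a best reply to
its (already coloured) predecessors. Each player's best-reply condition only sees its
predecessors, so it holds in the final profile: on `D` because `D` is closed under
predecessors, elsewhere by construction.
-/

open Finset Relation

theorem Finite.wellFounded_of_forall_not_transGen_self {V : Type*} [Finite V]
    {E : V → V → Prop} (hacyc : ∀ v, ¬ TransGen E v v) : WellFounded E :=
  have : Std.Irrefl (TransGen E) := ⟨hacyc⟩
  Subrelation.wf TransGen.single (Finite.wellFounded_of_trans_of_irrefl _)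

section BestReply

variable {V M α : Type*} (E : V → V → Prop) (C : V → Finset M) (u : V → M → (V → M) → α)

def DependsOnlyOnPredecessors : Prop :=
  ∀ i c (g g' : V → M), (∀ j, E j i → g j = g' j) → u i c g = u i c g'

variable [LinearOrder α]

def IsBestReply (i : V) (c : M) (g : V → M) : Prop :=
  c ∈ C i ∧ ∀ c' ∈ C i, u i c' g ≤ u i c g

variable {E C u}

theorem IsBestReply.of_eq_on_predecessors (hu : DependsOnlyOnPredecessors E u) {i : V}
    {c : M} {g g' : V → M} (hgg' : ∀ j, E j i → g j = g' j) (h : IsBestReply C u i c g) :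
    IsBestReply C u i c g' := by
  refine ⟨h.1, fun c' hc' => ?_⟩
  rw [← hu i c g g' hgg', ← hu i c' g g' hgg']
  exact h.2 c' hc'

theorem exists_isBestReply (hC : ∀ i, (C i).Nonempty) (i : V) (g : V → M) :
    ∃ c, IsBestReply C u i c g :=
  let ⟨c, hc, hmax⟩ := (C i).exists_max_image (fun c => u i c g) (hC i)
  ⟨c, hc, hmax⟩

theorem exists_extension_forall_isBestReply (hwf : WellFounded E)
    (hu : DependsOnlyOnPredecessors E u) (hC : ∀ i, (C i).Nonempty) {D : Set V}
    (hD : ∀ i ∈ D, ∀ j, E j i → j ∈ D) {s : V → M} (hsD : ∀ i ∈ D, IsBestReply C u i (s i) s) :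
    ∃ t : V → M, (∀ i ∈ D, t i = s i) ∧ ∀ i, IsBestReply C u i (t i) t := by
  classical
  choose best hbest using exists_isBestReply (u := u) hC
  -- `s` fills in the non-predecessors, which the payoff of `i` ignores.
  let extend (i : V) (f : ∀ j, E j i → M) : V → M := fun j => if h : E j i then f j h else s j
  let t : V → M := hwf.fix fun i f => if i ∈ D then s i else best i (extend i f)
  have ht (i : V) : t i = if i ∈ D then s i else best i (extend i fun j _ => t j) :=
    hwf.fix_eq _ i
  have htD (i : V) (hi : i ∈ D) : t i = s i := by rw [ht, if_pos hi]
  refine ⟨t, htD, fun i => ?_⟩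
  by_cases hi : i ∈ D
  · rw [htD i hi]
    exact (hsD i hi).of_eq_on_predecessors hu fun j hj => (htD j (hD i hi j hj)).symm
  · rw [ht, if_neg hi]
    exact (hbest i _).of_eq_on_predecessors hu fun j hj => dif_pos hj

end BestReply

theorem dependsOnlyOnPredecessors_coordinationPayoff {V M R : Type*} [Fintype V]
    [AddCommMonoid R] (E : V → V → Prop) [DecidableRel E] [DecidableEq M] (w : V → V → R)
    (β : V → M → R) :
    DependsOnlyOnPredecessors E fun i c s =>
      (∑ j ∈ univ.filter (fun j => E j i ∧ s j = c), w j i) + β i c := by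
  intro i c g g' hgg'
  dsimp only
  congr 2
  exact filter_congr fun j _ => and_congr_right fun hj => by rw [hgg' j hj]

theorem stmt_15_general {V M : Type*} [Fintype V] [DecidableEq V] [DecidableEq M]
    (E : V → V → Prop) [DecidableRel E]
    (hacyc : ∀ v, ¬ Relation.TransGen E v v)
    (w : V → V → ℚ)
    (C : V → Finset M) (hC : ∀ i, (C i).Nonempty) (β : V → M → ℤ)
    (payoff : V → M → (V → M) → ℚ)
    (hpayoff : ∀ i c s, payoff i c s =
      (∑ j ∈ Finset.univ.filter (fun j => E j i ∧ s j = c), w j i) + (β i c : ℚ))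
    (D : Set V) (hD : ∀ i ∈ D, ∀ j, E j i → j ∈ D)
    (s : V → M)
    (hsD : ∀ i ∈ D, s i ∈ C i ∧ ∀ c ∈ C i, payoff i c s ≤ payoff i (s i) s) :
    ∃ t : V → M, (∀ i ∈ D, t i = s i) ∧ (∀ i, t i ∈ C i) ∧
      ∀ i, ∀ c ∈ C i, payoff i c t ≤ payoff i (t i) t := by
  have hu : DependsOnlyOnPredecessors E payoff := by
    simpa only [← hpayoff] using
      dependsOnlyOnPredecessors_coordinationPayoff E w fun i c => (β i c : ℚ)
  obtain ⟨t, hts, ht⟩ := exists_extension_forall_isBestReply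
    (Finite.wellFounded_of_forall_not_transGen_self hacyc) hu hC hD hsD
  exact ⟨t, hts, fun i => (ht i).1, fun i => (ht i).2⟩

/-- In a coordination game on a weighted DAG, every partial joint strategy defined on a
set `D` of players closed under predecessors, in which each player of `D` plays a best
response, extends to a pure Nash equilibrium of the whole game.  (Taking `D = ∅`, every
coordination game on a DAG has a pure Nash equilibrium.) -/
theorem stmt_15 {V M : Type*} [Fintype V] [DecidableEq V] [DecidableEq M]
    (E : V → V → Prop) [DecidableRel E]
    (hacyc : ∀ v, ¬ Relation.TransGen E v v)
    (w : V → V → ℚ) (hw : ∀ i j, 0 ≤ w i j)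
    (C : V → Finset M) (hC : ∀ i, (C i).Nonempty) (β : V → M → ℤ)
    (payoff : V → M → (V → M) → ℚ)
    (hpayoff : ∀ i c s, payoff i c s =
      (∑ j ∈ Finset.univ.filter (fun j => E j i ∧ s j = c), w j i) + (β i c : ℚ))
    (D : Set V) (hD : ∀ i ∈ D, ∀ j, E j i → j ∈ D)
    (s : V → M)
    (hsD : ∀ i ∈ D, s i ∈ C i ∧ ∀ c ∈ C i, payoff i c s ≤ payoff i (s i) s) :
    ∃ t : V → M, (∀ i ∈ D, t i = s i) ∧ (∀ i, t i ∈ C i) ∧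
      ∀ i, ∀ c ∈ C i, payoff i c t ≤ payoff i (t i) t :=
  stmt_15_general E hacyc w C hC β payoff hpayoff D hD s hsD
end
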